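/- arXiv:1904.09665 — 3 statements merged into one kernel-verified Lean document; each statement's English description precedes it below -/
import Mathlib

section
/- Let n ≥ 3 and on the unit sphere S^n write points as (ω sin φ, cos φ) with φ ∈ [0,π]. If f(φ) = -log((1/2) sin φ), then -Δ_{S^n} f = (sin φ)^{-2}((n-2)cos²φ - sin²φ), so that with V = ((n-2)cos²φ - sin²φ)/(sin²φ · log((1/2) sin φ)) one has (-Δ_{S^n} + V) f = 0. -/
open Real

/-- The Laplace–Beltrami operator on `S^n` acting on functions of the polar angle `φ`:
`Δ f = (sin φ)^{-(n-1)} ∂_φ ((sin φ)^{n-1} ∂_φ f)`. -/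
noncomputable def sphereLaplacian (n : ℕ) (f : ℝ → ℝ) (φ : ℝ) : ℝ :=
  ((Real.sin φ) ^ (n - 1))⁻¹ * deriv (fun t => (Real.sin t) ^ (n - 1) * deriv f t) φ

/-!
On radial functions the Laplacian of `S^n` is `f'' + (n - 1) cot φ · f'`. For
`f = -log((1/2) sin φ)` we have `f' = -cot φ` and `f'' = 1 / sin² φ`, so
`-Δ f = ((n - 1) cos² φ - 1) / sin² φ = ((n - 2) cos² φ - sin² φ) / sin² φ`.
The potential `V` is `Δ f / f`, which makes sense because `0 < sin φ / 2 < 1` forces `f φ > 0`.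
-/

open Filter Topology

theorem sphereLaplacian_succ_eq {f f' : ℝ → ℝ} {f'' φ : ℝ} (n : ℕ) (hφ : sin φ ≠ 0)
    (hf : ∀ᶠ t in 𝓝 φ, HasDerivAt f (f' t) t) (hf' : HasDerivAt f' f'' φ) :
    sphereLaplacian (n + 1) f φ = f'' + n * (cos φ / sin φ) * f' φ := by
  have hflux : HasDerivAt (fun t => sin t ^ n * deriv f t)
      (n * sin φ ^ (n - 1) * cos φ * f' φ + sin φ ^ n * f'') φ :=
    (((hasDerivAt_sin φ).pow n).mul hf').congr_of_eventuallyEq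
      (hf.mono fun t ht => by simp [ht.deriv])
  rw [sphereLaplacian, Nat.add_sub_cancel, hflux.deriv]
  rcases n with _ | k
  · simp
  · rw [Nat.add_sub_cancel]
    field_simp
    ring

theorem hasDerivAt_neg_log_sin_div_two {t : ℝ} (ht : sin t ≠ 0) :
    HasDerivAt (fun ψ => -log (sin ψ / 2)) (-(cos t / sin t)) t := by
  refine (((hasDerivAt_sin t).div_const 2).log (by simpa using ht)).neg.congr_deriv ?_
  field_simp

theorem hasDerivAt_neg_cot {t : ℝ} (ht : sin t ≠ 0) :
    HasDerivAt (fun ψ => -(cos ψ / sin ψ)) (1 / sin t ^ 2) t := by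
  refine ((hasDerivAt_cos t).fun_div (hasDerivAt_sin t) ht).neg.congr_deriv ?_
  field_simp
  linear_combination sin_sq_add_cos_sq t

theorem sphereLaplacian_neg_log_sin_div_two {φ : ℝ} (n : ℕ) (hφ : sin φ ≠ 0) :
    sphereLaplacian (n + 1) (fun ψ => -log (sin ψ / 2)) φ = (1 - n * cos φ ^ 2) / sin φ ^ 2 := by
  have hsin : ∀ᶠ t in 𝓝 φ, sin t ≠ 0 := continuous_sin.continuousAt.eventually_ne hφ
  rw [sphereLaplacian_succ_eq n hφ (hsin.mono fun t => hasDerivAt_neg_log_sin_div_two)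
    (hasDerivAt_neg_cot hφ)]
  field_simp
  ring

/-- on `S^n`, `n ≥ 3`, the radial function `f(φ) = -log((1/2) sin φ)` satisfies
`-Δ f = (sin φ)^{-2}((n-2) cos² φ - sin² φ)`, and hence with
`V = ((n-2)cos²φ - sin²φ)/(sin²φ · log((1/2) sin φ))` one has `(-Δ + V) f = 0`. -/
theorem stmt_0 (n : ℕ) (hn : 3 ≤ n) (φ : ℝ) (hφ : φ ∈ Set.Ioo 0 Real.pi)
    (f V : ℝ → ℝ)
    (hf : f = fun ψ => -Real.log (Real.sin ψ / 2))
    (hV : V = fun ψ =>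
      (((n : ℝ) - 2) * Real.cos ψ ^ 2 - Real.sin ψ ^ 2) /
        (Real.sin ψ ^ 2 * Real.log (Real.sin ψ / 2))) :
    (-(sphereLaplacian n f φ) =
        (Real.sin φ ^ 2)⁻¹ * (((n : ℝ) - 2) * Real.cos φ ^ 2 - Real.sin φ ^ 2)) ∧
      (-(sphereLaplacian n f φ) + V φ * f φ = 0) := by
  obtain ⟨m, rfl⟩ : ∃ m, n = m + 1 := ⟨n - 1, by omega⟩
  have hsin : 0 < sin φ := sin_pos_of_pos_of_lt_pi hφ.1 hφ.2
  have hlog : log (sin φ / 2) ≠ 0 :=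
    (log_neg (by positivity) (by linarith [sin_le_one φ])).ne
  have hΔ : -sphereLaplacian (m + 1) f φ =
      (sin φ ^ 2)⁻¹ * (((↑(m + 1) : ℝ) - 2) * cos φ ^ 2 - sin φ ^ 2) := by
    rw [hf, sphereLaplacian_neg_log_sin_div_two m hsin.ne']
    push_cast
    field_simp
    linear_combination sin_sq_add_cos_sq φ
  refine ⟨hΔ, ?_⟩
  rw [hΔ, hV, hf]
  field_simp
  ring
end

section
/- The potential V(φ) = ((n-2)cos²φ - sin²φ)/(sin²φ · log((1/2) sin φ)) on S^n (n ≥ 3), depending only on the polar angle φ, belongs to L^{n/2}(S^n) but not to L^{n/2+δ}(S^n) for any δ > 0. -/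
/-!
In polar coordinates `|V|^q sin^{n-1} φ = |(n-2) cos² φ - sin² φ|^q · sin^{n-1-2q} φ ·
(-log (sin φ / 2))^{-q}`, and `V` is invariant under `φ ↦ π - φ`, so only the behaviour at
`φ = 0` matters, where `φ / 2 ≤ sin φ ≤ φ`. For `q = n/2` the integrand is
`O(φ⁻¹ (-log (φ/2))^{-n/2})`, which is integrable because `n/2 > 1`: it is the derivative of a
multiple of `(-log (φ/2))^{1-n/2}`. For `q = n/2 + δ` the numerator is at least `1/2` near `0`,
and `log (4/φ) ≤ (4/φ)^ε / ε` with `ε = δ/q` bounds the integrand below by `c φ^{-1-δ}`,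
which is not integrable at `0`.
-/

open Real MeasureTheory Set Filter Topology

lemma integrableOn_Ioo_of_comp_sub_eq {E : Type*} [NormedAddCommGroup E] {f : ℝ → E} {a : ℝ}
    (ha : 0 ≤ a) (hf : ∀ x, f (a - x) = f x) (h : IntegrableOn f (Ioc 0 (a / 2))) :
    IntegrableOn f (Ioo 0 a) := by
  have left : IntervalIntegrable f volume 0 (a / 2) :=
    (intervalIntegrable_iff_integrableOn_Ioc_of_le (by positivity)).2 h
  have right : IntervalIntegrable f volume (a / 2) a := by
    have := left.comp_sub_left a
    simp only [hf, sub_zero, show a - a / 2 = a / 2 by ring] at this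
    exact this.symm
  exact (intervalIntegrable_iff_integrableOn_Ioo_of_le ha).1 (left.trans right)

lemma neg_log_div_pos {x c : ℝ} (hx : 0 < x) (hxc : x < c) : 0 < -log (x / c) :=
  neg_pos.2 (log_neg (div_pos hx (hx.trans hxc)) ((div_lt_one (hx.trans hxc)).2 hxc))

lemma hasDerivAt_neg_log_div_rpow {c p x : ℝ} (hp : p ≠ 1) (hx : 0 < x) (hxc : x < c) :
    HasDerivAt (fun y => (-log (y / c)) ^ (1 - p) / (p - 1))
      (x⁻¹ * (-log (x / c)) ^ (-p)) x := by
  have hc : 0 < c := hx.trans hxc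
  have hlog : HasDerivAt (fun y => -log (y / c)) (-x⁻¹) x := by
    refine (((hasDerivAt_id x).div_const c).log (div_pos hx hc).ne').neg.congr_deriv ?_
    simp only [id_eq]
    field_simp
  refine ((hlog.rpow_const (Or.inl (neg_log_div_pos hx hxc).ne')).div_const (p - 1)).congr_deriv ?_
  rw [show 1 - p - 1 = -p by ring]
  field_simp [sub_ne_zero.2 hp]
  ring

lemma tendsto_neg_log_div_rpow_neg_nhdsGT_zero {c r : ℝ} (hc : 0 < c) (hr : 0 < r) :
    Tendsto (fun x => (-log (x / c)) ^ (-r)) (𝓝[>] 0) (𝓝 0) := by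
  have hdiv : Tendsto (fun x : ℝ => x / c) (𝓝[>] 0) (𝓝[>] 0) := by
    refine tendsto_nhdsWithin_of_tendsto_nhds_of_eventually_within _ ?_ ?_
    · simpa using (continuous_id.div_const c).tendsto' 0 0 (by simp) |>.mono_left
        nhdsWithin_le_nhds
    · filter_upwards [self_mem_nhdsWithin] with x hx using div_pos hx hc
  exact (tendsto_rpow_neg_atTop hr).comp
    (tendsto_neg_atBot_atTop.comp (tendsto_log_nhdsGT_zero.comp hdiv))

lemma integrableOn_inv_mul_neg_log_div_rpow_neg {b c p : ℝ} (hc : 0 < c) (hbc : b < c)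
    (hp : 1 < p) : IntegrableOn (fun x => x⁻¹ * (-log (x / c)) ^ (-p)) (Ioc 0 b) := by
  refine intervalIntegral.integrableOn_deriv_of_nonneg
    (g := fun y => (-log (y / c)) ^ (1 - p) / (p - 1)) ?_
    (fun x hx => hasDerivAt_neg_log_div_rpow hp.ne' hx.1 (hx.2.trans hbc))
    (fun x hx => mul_nonneg (inv_nonneg.2 hx.1.le)
      (rpow_nonneg (neg_log_div_pos hx.1 (hx.2.trans hbc)).le _))
  intro x hx
  rcases hx.1.eq_or_lt with rfl | hx0
  · -- junk values: `log 0 = 0` and `0 ^ (1 - p) = 0` make the antiderivative vanish at `0`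
    have h0 : (-log (0 / c)) ^ (1 - p) / (p - 1) = 0 := by
      simp [zero_rpow (by linarith : 1 - p ≠ 0)]
    refine (continuousWithinAt_Ioi_iff_Ici.1 ?_).mono Icc_subset_Ici_self
    rw [ContinuousWithinAt, h0]
    simpa [neg_sub, div_eq_mul_inv] using
      ((tendsto_neg_log_div_rpow_neg_nhdsGT_zero hc (sub_pos.2 hp)).div_const (p - 1))
  · exact (hasDerivAt_neg_log_div_rpow hp.ne' hx0 (hx.2.trans_lt hbc)).continuousAt
      |>.continuousWithinAt

lemma mul_rpow_le_neg_log_rpow_neg {y ε q : ℝ} (hy0 : 0 < y) (hy1 : y < 1) (hε : 0 < ε)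
    (hq : 0 ≤ q) : (ε * y ^ ε) ^ q ≤ (-log y) ^ (-q) := by
  have hL : 0 < -log y := neg_pos.2 (log_neg hy0 hy1)
  have hlog : -log y ≤ (ε * y ^ ε)⁻¹ := by
    have := log_le_rpow_div (inv_nonneg.2 hy0.le) hε
    rwa [log_inv, inv_rpow hy0.le, div_eq_mul_inv, ← mul_inv, mul_comm] at this
  rw [rpow_neg hL.le, ← inv_rpow hL.le]
  exact rpow_le_rpow (by positivity) ((le_inv_comm₀ hL (by positivity)).1 hlog) hq

lemma half_le_sin {x : ℝ} (hx : 0 ≤ x) (hxπ : x ≤ π / 2) : x / 2 ≤ sin x := by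
  have : x / 2 ≤ 2 / π * x := by
    rw [div_mul_eq_mul_div, div_le_div_iff₀ two_pos pi_pos]
    nlinarith [pi_lt_four]
  exact this.trans (mul_le_sin hx hxπ)

lemma abs_mul_cos_sq_sub_sin_sq_le {m : ℝ} (hm : 0 ≤ m) (x : ℝ) :
    |m * cos x ^ 2 - sin x ^ 2| ≤ m + 1 := by
  have := sin_sq_add_cos_sq x
  rw [abs_le]
  constructor <;> nlinarith [sq_nonneg (sin x), sq_nonneg (cos x)]

lemma half_le_mul_cos_sq_sub_sin_sq {m : ℝ} (hm : 1 ≤ m) {x : ℝ} (hx : |x| ≤ 1 / 2) :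
    1 / 2 ≤ m * cos x ^ 2 - sin x ^ 2 := by
  have := sin_sq_add_cos_sq x
  have hsin : sin x ^ 2 ≤ 1 / 4 := sin_sq_le_sq.trans (by nlinarith [sq_abs x, abs_nonneg x])
  nlinarith [sq_nonneg (cos x)]

noncomputable def sphPotential (n : ℕ) (φ : ℝ) : ℝ :=
  (((n : ℝ) - 2) * cos φ ^ 2 - sin φ ^ 2) / (sin φ ^ 2 * log (sin φ / 2))

lemma sphPotential_pi_sub (n : ℕ) (φ : ℝ) : sphPotential n (π - φ) = sphPotential n φ := by
  simp only [sphPotential, sin_pi_sub, cos_pi_sub, neg_sq]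

lemma neg_log_sin_div_two_pos {φ : ℝ} (hφ : φ ∈ Ioo 0 π) : 0 < -log (sin φ / 2) :=
  neg_log_div_pos (sin_pos_of_pos_of_lt_pi hφ.1 hφ.2) ((sin_le_one φ).trans_lt one_lt_two)

lemma continuousOn_sphPotential (n : ℕ) : ContinuousOn (sphPotential n) (Ioo 0 π) := by
  refine ContinuousOn.div (by fun_prop) ?_ fun φ hφ => ?_
  · refine (continuous_sin.pow 2).continuousOn.mul
      ((continuous_sin.div_const 2).continuousOn.log fun φ hφ => ?_)
    exact (div_pos (sin_pos_of_pos_of_lt_pi hφ.1 hφ.2) two_pos).ne'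
  · have hs := sin_pos_of_pos_of_lt_pi hφ.1 hφ.2
    exact mul_ne_zero (by positivity) (neg_pos.1 (neg_log_sin_div_two_pos hφ)).ne

lemma abs_sphPotential_rpow_mul_sin_pow {n : ℕ} (hn : 1 ≤ n) (q : ℝ) {φ : ℝ}
    (hφ : φ ∈ Ioo 0 π) :
    |sphPotential n φ| ^ q * sin φ ^ (n - 1) =
      |((n : ℝ) - 2) * cos φ ^ 2 - sin φ ^ 2| ^ q *
        (sin φ ^ ((n : ℝ) - 1 - 2 * q) * (-log (sin φ / 2)) ^ (-q)) := by
  have hs := sin_pos_of_pos_of_lt_pi hφ.1 hφ.2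
  have hL := neg_log_sin_div_two_pos hφ
  have hsq : (sin φ ^ 2) ^ q = sin φ ^ (2 * q) := by
    rw [← rpow_natCast, ← rpow_mul hs.le, Nat.cast_ofNat]
  have hpow : sin φ ^ (n - 1) = sin φ ^ ((n : ℝ) - 1) := by
    rw [← rpow_natCast, Nat.cast_sub hn, Nat.cast_one]
  rw [sphPotential, abs_div, abs_mul, abs_of_pos (by positivity : 0 < sin φ ^ 2),
    abs_of_neg (neg_pos.1 hL), div_rpow (abs_nonneg _) (by positivity),
    mul_rpow (by positivity) hL.le, hsq, hpow, rpow_neg hL.le, rpow_sub hs _ (2 * q)]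
  field_simp

lemma abs_sphPotential_rpow_mul_sin_pow_le {n : ℕ} (hn : 2 ≤ n) {φ : ℝ}
    (hφ : φ ∈ Ioc 0 (π / 2)) :
    |sphPotential n φ| ^ ((n : ℝ) / 2) * sin φ ^ (n - 1) ≤
      2 * ((n : ℝ) - 1) ^ ((n : ℝ) / 2) * (φ⁻¹ * (-log (φ / 2)) ^ (-((n : ℝ) / 2))) := by
  obtain ⟨hφ0, hφπ⟩ := hφ
  set q := (n : ℝ) / 2
  have hn' : (2 : ℝ) ≤ n := by exact_mod_cast hn
  have hq : 0 ≤ q := by positivity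
  have hφ' : φ ∈ Ioo 0 π := ⟨hφ0, by linarith [pi_pos]⟩
  have hs : 0 < sin φ := sin_pos_of_pos_of_lt_pi hφ'.1 hφ'.2
  have hsφ : φ / 2 ≤ sin φ := half_le_sin hφ0.le hφπ
  have hLφ : 0 < -log (φ / 2) := neg_log_div_pos hφ0 (by linarith [pi_lt_four])
  have hLs : 0 ≤ (-log (sin φ / 2)) ^ (-q) := rpow_nonneg (neg_log_sin_div_two_pos hφ').le _
  rw [abs_sphPotential_rpow_mul_sin_pow (by omega) q hφ',
    show (n : ℝ) - 1 - 2 * q = -1 by ring, rpow_neg_one]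
  have hnum : |((n : ℝ) - 2) * cos φ ^ 2 - sin φ ^ 2| ^ q ≤ ((n : ℝ) - 1) ^ q := by
    have := abs_mul_cos_sq_sub_sin_sq_le (by linarith : (0 : ℝ) ≤ n - 2) φ
    exact rpow_le_rpow (abs_nonneg _) (by linarith) hq
  have hsin : (sin φ)⁻¹ ≤ 2 * φ⁻¹ := by
    rw [← div_eq_mul_inv, ← inv_div]
    exact inv_anti₀ (by positivity) hsφ
  have hlog : (-log (sin φ / 2)) ^ (-q) ≤ (-log (φ / 2)) ^ (-q) :=
    rpow_le_rpow_of_nonpos hLφ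
      (neg_le_neg (log_le_log (by positivity) (by linarith [sin_le hφ0.le])))
      (neg_nonpos.2 hq)
  calc |((n : ℝ) - 2) * cos φ ^ 2 - sin φ ^ 2| ^ q *
        ((sin φ)⁻¹ * (-log (sin φ / 2)) ^ (-q))
      ≤ ((n : ℝ) - 1) ^ q * ((2 * φ⁻¹) * (-log (φ / 2)) ^ (-q)) :=
        mul_le_mul hnum (mul_le_mul hsin hlog hLs (by positivity))
          (mul_nonneg (inv_nonneg.2 (by linarith)) hLs) (rpow_nonneg (by linarith) _)
    _ = _ := by ring

lemma exists_mul_rpow_le_abs_sphPotential_rpow_mul_sin_pow {n : ℕ} (hn : 3 ≤ n) {δ : ℝ}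
    (hδ : 0 < δ) :
    ∃ c > 0, ∀ φ ∈ Ioo (0 : ℝ) (1 / 2),
      c * φ ^ (-1 - δ) ≤ |sphPotential n φ| ^ ((n : ℝ) / 2 + δ) * sin φ ^ (n - 1) := by
  set q := (n : ℝ) / 2 + δ
  have hq : 0 < q := by positivity
  set ε := δ / q
  have hε : 0 < ε := div_pos hδ hq
  have hεq : ε * q = δ := div_mul_cancel₀ δ hq.ne'
  refine ⟨(1 / 2) ^ q * ε ^ q / 4 ^ δ, by positivity, fun φ ⟨hφ0, hφ⟩ => ?_⟩
  have hφπ : φ < π := by linarith [pi_gt_three]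
  have hs : 0 < sin φ := sin_pos_of_pos_of_lt_pi hφ0 hφπ
  have hsφ : φ / 2 ≤ sin φ := half_le_sin hφ0.le (by linarith [pi_gt_three])
  rw [abs_sphPotential_rpow_mul_sin_pow (by omega) q ⟨hφ0, hφπ⟩,
    show (n : ℝ) - 1 - 2 * q = -1 - 2 * δ by ring]
  have hnum : (1 / 2 : ℝ) ^ q ≤ |((n : ℝ) - 2) * cos φ ^ 2 - sin φ ^ 2| ^ q := by
    have hn' : (3 : ℝ) ≤ n := by exact_mod_cast hn
    refine rpow_le_rpow (by norm_num) (le_abs.2 (Or.inl ?_)) hq.le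
    exact half_le_mul_cos_sq_sub_sin_sq (by linarith) (by rw [abs_of_pos hφ0]; linarith)
  have hsin : φ ^ (-1 - 2 * δ) ≤ sin φ ^ (-1 - 2 * δ) :=
    rpow_le_rpow_of_nonpos hs (sin_le hφ0.le) (by linarith)
  have hlog : ε ^ q * φ ^ δ / 4 ^ δ ≤ (-log (sin φ / 2)) ^ (-q) :=
    calc ε ^ q * φ ^ δ / 4 ^ δ = ε ^ q * (φ / 4) ^ δ := by
          rw [div_rpow hφ0.le (by norm_num)]; ring
      _ ≤ ε ^ q * (sin φ / 2) ^ δ := by gcongr ε ^ q * ?_ ^ δ; linarith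
      _ = (ε * (sin φ / 2) ^ ε) ^ q := by
          rw [mul_rpow hε.le (by positivity), ← rpow_mul (by positivity), hεq]
      _ ≤ _ :=
          mul_rpow_le_neg_log_rpow_neg (by positivity) (by linarith [sin_le_one φ]) hε hq.le
  calc (1 / 2) ^ q * ε ^ q / 4 ^ δ * φ ^ (-1 - δ)
      = (1 / 2) ^ q * (φ ^ (-1 - 2 * δ) * (ε ^ q * φ ^ δ / 4 ^ δ)) := by
        rw [show -1 - δ = -1 - 2 * δ + δ by ring, rpow_add hφ0]; ring
    _ ≤ _ := mul_le_mul hnum (mul_le_mul hsin hlog (by positivity) (by positivity))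
        (by positivity) (by positivity)

lemma integrableOn_abs_sphPotential_rpow_half_mul_sin_pow {n : ℕ} (hn : 3 ≤ n) :
    IntegrableOn (fun φ => |sphPotential n φ| ^ ((n : ℝ) / 2) * sin φ ^ (n - 1))
      (Ioo 0 π) := by
  have hn' : (3 : ℝ) ≤ n := by exact_mod_cast hn
  refine integrableOn_Ioo_of_comp_sub_eq pi_pos.le
    (fun φ => by simp only [sphPotential_pi_sub, sin_pi_sub]) ?_
  have hcont : ContinuousOn (fun φ => |sphPotential n φ| ^ ((n : ℝ) / 2) * sin φ ^ (n - 1))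
      (Ioo 0 π) :=
    ((continuousOn_sphPotential n).abs.rpow_const fun _ _ => Or.inr (by positivity)).mul
      (continuous_sin.pow _).continuousOn
  have hbound := integrableOn_inv_mul_neg_log_div_rpow_neg (b := π / 2) two_pos
    (by linarith [pi_lt_four]) (by linarith : 1 < (n : ℝ) / 2)
  refine (hbound.const_mul (2 * ((n : ℝ) - 1) ^ ((n : ℝ) / 2))).mono' ?_ ?_
  · exact (hcont.mono fun φ hφ => ⟨hφ.1, by linarith [hφ.2, pi_pos]⟩).aestronglyMeasurable
      measurableSet_Ioc
  · filter_upwards [ae_restrict_mem measurableSet_Ioc] with φ hφ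
    have hs : 0 < sin φ := sin_pos_of_pos_of_lt_pi hφ.1 (by linarith [hφ.2, pi_pos])
    rw [norm_of_nonneg (by positivity)]
    exact abs_sphPotential_rpow_mul_sin_pow_le (by omega) hφ

lemma not_integrableOn_abs_sphPotential_rpow_mul_sin_pow {n : ℕ} (hn : 3 ≤ n) {δ : ℝ}
    (hδ : 0 < δ) :
    ¬ IntegrableOn (fun φ => |sphPotential n φ| ^ ((n : ℝ) / 2 + δ) * sin φ ^ (n - 1))
      (Ioo 0 π) := by
  intro hint
  obtain ⟨c, hc, hle⟩ := exists_mul_rpow_le_abs_sphPotential_rpow_mul_sin_pow hn hδ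
  have hpow : IntegrableOn (fun φ => c * φ ^ (-1 - δ)) (Ioo 0 (1 / 2)) := by
    have hsub : Ioo (0 : ℝ) (1 / 2) ⊆ Ioo 0 π :=
      Ioo_subset_Ioo_right (by linarith [pi_gt_three])
    refine Integrable.mono (hint.mono_set hsub) ?_ ?_
    · exact (continuousOn_const.mul (continuousOn_id.rpow_const fun φ hφ =>
        Or.inl hφ.1.ne')).aestronglyMeasurable measurableSet_Ioo
    · filter_upwards [ae_restrict_mem measurableSet_Ioo] with φ hφ
      have hs : 0 < sin φ := sin_pos_of_pos_of_lt_pi hφ.1 (by linarith [hφ.2, pi_gt_three])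
      have hφ0 := hφ.1
      rw [norm_of_nonneg (by positivity), norm_of_nonneg (by positivity)]
      exact hle φ hφ
  have hrpow : IntegrableOn (fun φ : ℝ => φ ^ (-1 - δ)) (Ioo 0 (1 / 2)) := by
    simpa [IntegrableOn, ← mul_assoc, inv_mul_cancel₀ hc.ne'] using hpow.const_mul c⁻¹
  linarith [(intervalIntegral.integrableOn_Ioo_rpow_iff (by norm_num)).1 hrpow]

/-- the potential `V(φ) = ((n-2)cos²φ - sin²φ)/(sin²φ · log((1/2) sin φ))` on `S^n`
(`n ≥ 3`), depending only on the polar angle, belongs to `L^{n/2}(S^n)` but not to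
`L^{n/2+δ}(S^n)` for any `δ > 0`.  In polar coordinates the measure on `S^n` has density
`(sin φ)^{n-1} dφ dω`, so membership in `L^q(S^n)` for a radial function is expressed by
integrability of `|V(φ)|^q (sin φ)^{n-1}` over `φ ∈ (0, π)`. -/
theorem stmt_2 (n : ℕ) (hn : 3 ≤ n) (V : ℝ → ℝ)
    (hV : V = fun φ =>
      (((n : ℝ) - 2) * Real.cos φ ^ 2 - Real.sin φ ^ 2) /
        (Real.sin φ ^ 2 * Real.log (Real.sin φ / 2))) :
    IntegrableOn (fun φ => |V φ| ^ ((n : ℝ) / 2) * Real.sin φ ^ (n - 1))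
        (Set.Ioo 0 Real.pi) ∧
      ∀ δ : ℝ, 0 < δ →
        ¬ IntegrableOn (fun φ => |V φ| ^ ((n : ℝ) / 2 + δ) * Real.sin φ ^ (n - 1))
            (Set.Ioo 0 Real.pi) := by
  obtain rfl : V = sphPotential n := hV
  exact ⟨integrableOn_abs_sphPotential_rpow_half_mul_sin_pow hn,
    fun _ hδ => not_integrableOn_abs_sphPotential_rpow_mul_sin_pow hn hδ⟩
end

section
/- Let n = 2, λ ≥ 1, and suppose a kernel T(x,y) on a finite-measure metric measure space M satisfies |T(x,y)| ≤ C₀ λ^{-1/2} d(x,y)^{-1/2} when d(x,y) ≥ λ^{-1}, |T(x,y)| ≤ C₀ |log(λ d(x,y)/2)| when d(x,y) ≤ λ^{-1}, and T(x,y) = 0 when d(x,y) > δ. If moreover the measure of balls satisfies μ(B_r(y)) ≤ C r² for r ≤ δ, then sup_y (∫ |T(x,y)|⁶ dμ(x))^{1/6} ≤ C' λ^{-1/3}. Consequently, by Minkowski's integral inequality, ‖∫ T(·,y) g(y) dμ(y)‖_{L⁶} ≤ C' λ^{-1/3} ‖g‖_{L¹}. -/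
/-!
With `s = λ d(x,y)`, both kernel bounds give `|T(x,y)|⁶ ≲ ψ(s) = min(s⁻¹, s⁻³)`: for `s ≤ 1`
the logarithm costs only a factor `s^{-1/6}`, for `s ≥ 1` it is `(λ d)^{-3}`. Cut `{0 < d < δ}`
into the dyadic shells `2^k ≤ λ d < 2^{k+1}`, `k ∈ ℤ`. Two-dimensional volume growth gives the
`k`-th shell measure `≲ C 4^k λ⁻²`, so it contributes `≲ C λ⁻² 4^k ψ(2^k) = C λ⁻² 2^{-|k|}`,
a geometric series of total `O(λ⁻²)`; the sphere `d = δ` adds `≲ μ(M) (λδ)⁻²`. Sixth roots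
give `λ^{-1/3}`. The `L¹ → L⁶` bound follows from Hölder's inequality for the measure `|g| dμ`
and Tonelli.
-/

open MeasureTheory Real Metric Set Filter Topology
open scoped ENNReal

noncomputable def kernelProfile (s : ℝ) : ℝ := min s⁻¹ (s⁻¹ ^ 3)

theorem kernelProfile_of_le_one {s : ℝ} (hs : 0 < s) (h : s ≤ 1) : kernelProfile s = s⁻¹ :=
  min_eq_left (le_self_pow₀ ((one_le_inv₀ hs).2 h) (by norm_num))

theorem kernelProfile_of_one_le {s : ℝ} (h : 1 ≤ s) : kernelProfile s = s⁻¹ ^ 3 :=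
  min_eq_right (pow_le_of_le_one (inv_nonneg.2 (zero_le_one.trans h)) (inv_le_one_of_one_le₀ h)
    (by norm_num))

theorem kernelProfile_nonneg {s : ℝ} (hs : 0 ≤ s) : 0 ≤ kernelProfile s := by
  unfold kernelProfile; positivity

theorem kernelProfile_anti {r s : ℝ} (hr : 0 < r) (h : r ≤ s) :
    kernelProfile s ≤ kernelProfile r :=
  min_le_min (inv_anti₀ hr h) (pow_le_pow_left₀ (inv_nonneg.2 (hr.le.trans h)) (inv_anti₀ hr h) 3)

theorem sq_mul_kernelProfile {s : ℝ} (hs : 0 < s) : s ^ 2 * kernelProfile s = min s s⁻¹ := by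
  rw [kernelProfile, mul_min_of_nonneg _ _ (by positivity)]
  congr 1 <;> field_simp

theorem kernelProfile_le_inv_sq {s : ℝ} (hs : 0 < s) : kernelProfile s ≤ (s ^ 2)⁻¹ := by
  calc kernelProfile s = (s ^ 2)⁻¹ * (s ^ 2 * kernelProfile s) := by field_simp
    _ = (s ^ 2)⁻¹ * min s s⁻¹ := by rw [sq_mul_kernelProfile hs]
    _ ≤ (s ^ 2)⁻¹ * 1 := by
        gcongr; exact min_le_iff.2 ((le_total s 1).imp id inv_le_one_of_one_le₀)
    _ = (s ^ 2)⁻¹ := mul_one _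

theorem abs_log_half_pow_six_le {s : ℝ} (hs : 0 < s) (h : s ≤ 2) :
    |log (s / 2)| ^ 6 ≤ 2 * 6 ^ 6 * s⁻¹ := by
  have habs : |log (s / 2)| = log (2 / s) := by
    rw [abs_of_nonpos (log_nonpos (by positivity) (by linarith)), ← log_inv, inv_div]
  have hlog : log (2 / s) ≤ 6 * (2 / s) ^ (6⁻¹ : ℝ) := by
    have := log_le_rpow_div (x := 2 / s) (by positivity) (ε := 6⁻¹) (by norm_num)
    linarith [show (2 / s) ^ (6⁻¹ : ℝ) / 6⁻¹ = 6 * (2 / s) ^ (6⁻¹ : ℝ) by ring]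
  calc |log (s / 2)| ^ 6 ≤ (6 * (2 / s) ^ (6⁻¹ : ℝ)) ^ 6 := by
        rw [habs]; exact pow_le_pow_left₀ (log_nonneg (by rw [le_div_iff₀ hs]; linarith)) hlog 6
    _ = 6 ^ 6 * ((2 / s) ^ (6⁻¹ : ℝ)) ^ (6 : ℕ) := by ring
    _ = 2 * 6 ^ 6 * s⁻¹ := by
        rw [← rpow_natCast ((2 / s) ^ (6⁻¹ : ℝ)), ← rpow_mul (by positivity)]; norm_num; ring

theorem rpow_neg_half_pow_six {s : ℝ} (hs : 0 ≤ s) : (s ^ (-(1 : ℝ) / 2)) ^ 6 = s⁻¹ ^ 3 := by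
  rw [← rpow_natCast, ← rpow_mul hs]; norm_num

theorem pow_six_le_kernelProfile {C₀ lam d t : ℝ} (hC₀ : 0 ≤ C₀) (hlam : 0 < lam) (hd : 0 < d)
    (ht : 0 ≤ t) (hfar : lam⁻¹ ≤ d → t ≤ C₀ * lam ^ (-(1 : ℝ) / 2) * d ^ (-(1 : ℝ) / 2))
    (hnear : d ≤ lam⁻¹ → t ≤ C₀ * |log (lam * d / 2)|) :
    t ^ 6 ≤ 2 * (6 * C₀) ^ 6 * kernelProfile (lam * d) := by
  have hs : 0 < lam * d := mul_pos hlam hd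
  rcases le_total d lam⁻¹ with h | h
  · have h1 : lam * d ≤ 1 :=
      (mul_le_mul_of_nonneg_left h hlam.le).trans_eq (mul_inv_cancel₀ hlam.ne')
    calc t ^ 6 ≤ (C₀ * |log (lam * d / 2)|) ^ 6 := pow_le_pow_left₀ ht (hnear h) 6
      _ = C₀ ^ 6 * |log (lam * d / 2)| ^ 6 := mul_pow _ _ _
      _ ≤ C₀ ^ 6 * (2 * 6 ^ 6 * (lam * d)⁻¹) := by
          gcongr; exact abs_log_half_pow_six_le hs (by linarith)
      _ = 2 * (6 * C₀) ^ 6 * kernelProfile (lam * d) := by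
          rw [kernelProfile_of_le_one hs h1]; ring
  · have h1 : 1 ≤ lam * d := (inv_le_iff_one_le_mul₀' hlam).1 h
    calc t ^ 6 ≤ (C₀ * lam ^ (-(1 : ℝ) / 2) * d ^ (-(1 : ℝ) / 2)) ^ 6 :=
          pow_le_pow_left₀ ht (hfar h) 6
      _ = C₀ ^ 6 * (lam * d)⁻¹ ^ 3 := by
          rw [mul_assoc, ← mul_rpow hlam.le hd.le, mul_pow, rpow_neg_half_pow_six hs.le]
      _ ≤ 2 * (6 * C₀) ^ 6 * kernelProfile (lam * d) := by
          rw [kernelProfile_of_one_le h1]; gcongr; nlinarith [pow_nonneg hC₀ 6]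

theorem tsum_ofReal_mul_min_zpow_two_le {c : ℝ} (hc : 0 ≤ c) :
    ∑' k : ℤ, ENNReal.ofReal (c * min (2 ^ k) (2 ^ k)⁻¹) ≤ ENNReal.ofReal (4 * c) := by
  have hgeom : ∑' n : ℕ, ENNReal.ofReal (c * 2⁻¹ ^ n) = ENNReal.ofReal (2 * c) := by
    rw [← ENNReal.ofReal_tsum_of_nonneg (fun n => by positivity)
      ((summable_geometric_of_lt_one (by norm_num) (by norm_num)).mul_left c), tsum_mul_left,
      tsum_geometric_inv_two, mul_comm]
  have hpos : ∀ n : ℕ, min ((2 : ℝ) ^ (n : ℤ)) (2 ^ (n : ℤ))⁻¹ ≤ 2⁻¹ ^ n := fun n =>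
    (min_le_right _ _).trans_eq (by rw [zpow_natCast, inv_pow])
  have hneg : ∀ n : ℕ, min ((2 : ℝ) ^ (-(n + 1 : ℤ))) (2 ^ (-(n + 1 : ℤ)))⁻¹ ≤ 2⁻¹ ^ n := fun n =>
    (min_le_left _ _).trans (by
      rw [zpow_neg, ← inv_zpow, show ((n : ℤ) + 1) = ((n + 1 : ℕ) : ℤ) by push_cast; ring,
        zpow_natCast]
      exact pow_le_pow_of_le_one (by norm_num) (by norm_num) n.le_succ)
  rw [tsum_of_nat_of_neg_add_one ENNReal.summable ENNReal.summable]
  calc _ ≤ ∑' n : ℕ, ENNReal.ofReal (c * 2⁻¹ ^ n) + ∑' n : ℕ, ENNReal.ofReal (c * 2⁻¹ ^ n) := by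
        gcongr with n n
        · exact hpos n
        · exact hneg n
    _ = ENNReal.ofReal (4 * c) := by
        rw [hgeom, ← ENNReal.ofReal_add (by positivity) (by positivity)]; ring_nf

section VolumeGrowth

variable {M : Type*} [MetricSpace M] [MeasurableSpace M] {μ : Measure M} {C δ : ℝ} {y : M}

theorem measure_singleton_eq_zero_of_measure_ball_le (hδ : 0 < δ)
    (hvol : ∀ r, 0 < r → r ≤ δ → μ (ball y r) ≤ ENNReal.ofReal (C * r ^ 2)) : μ {y} = 0 := by
  have hlim : Tendsto (fun r : ℝ => ENNReal.ofReal (C * r ^ 2)) (𝓝[>] 0) (𝓝 0) := by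
    have : Tendsto (fun r : ℝ => C * r ^ 2) (𝓝[>] 0) (𝓝 (C * 0 ^ 2)) :=
      ((continuous_const.mul (continuous_pow 2)).tendsto 0).mono_left nhdsWithin_le_nhds
    simpa using ENNReal.tendsto_ofReal this
  refine le_antisymm (ge_of_tendsto hlim ?_) zero_le
  filter_upwards [Ioc_mem_nhdsGT hδ] with r hr
  exact (measure_mono (singleton_subset_iff.2 (mem_ball_self hr.1))).trans (hvol r hr.1 hr.2)

theorem measure_ball_inter_ball_le (hC : 0 ≤ C) (hδ : 0 < δ)
    (hvol : ∀ r, 0 < r → r ≤ δ → μ (ball y r) ≤ ENNReal.ofReal (C * r ^ 2))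
    {r : ℝ} (hr : 0 < r) :
    μ (ball y r ∩ ball y δ) ≤ ENNReal.ofReal (C * r ^ 2) := by
  have hmin : 0 < min r δ := lt_min hr hδ
  calc μ (ball y r ∩ ball y δ) ≤ μ (ball y (min r δ)) :=
        measure_mono fun _ hx => mem_ball.2 (lt_min hx.1 hx.2)
    _ ≤ ENNReal.ofReal (C * min r δ ^ 2) := hvol _ hmin (min_le_right _ _)
    _ ≤ ENNReal.ofReal (C * r ^ 2) := by gcongr; exact min_le_left _ _

variable {f : M → ℝ≥0∞} {B lam : ℝ}

theorem setLIntegral_shell_le (hC : 0 ≤ C) (hδ : 0 < δ)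
    (hvol : ∀ r, 0 < r → r ≤ δ → μ (ball y r) ≤ ENNReal.ofReal (C * r ^ 2))
    (hB : 0 ≤ B) (hlam : 0 < lam)
    (hf : ∀ x, 0 < dist x y → dist x y < δ →
      f x ≤ ENNReal.ofReal (B * kernelProfile (lam * dist x y))) (k : ℤ) :
    ∫⁻ x in {x | 2 ^ k ≤ lam * dist x y ∧ lam * dist x y < 2 ^ (k + 1) ∧ dist x y < δ}, f x ∂μ ≤
      ENNReal.ofReal (4 * B * C / lam ^ 2 * min (2 ^ k) (2 ^ k)⁻¹) := by
  set S := {x | 2 ^ k ≤ lam * dist x y ∧ lam * dist x y < 2 ^ (k + 1) ∧ dist x y < δ}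
  have hk : (0 : ℝ) < 2 ^ k := by positivity
  have hbound : ∀ x ∈ S, f x ≤ ENNReal.ofReal (B * kernelProfile (2 ^ k)) := by
    rintro x ⟨hlo, -, hδx⟩
    have hd : 0 < dist x y := pos_of_mul_pos_right (hk.trans_le hlo) hlam.le
    exact (hf x hd hδx).trans (ENNReal.ofReal_le_ofReal
      (mul_le_mul_of_nonneg_left (kernelProfile_anti hk hlo) hB))
  have hS : μ S ≤ ENNReal.ofReal (C * (2 ^ (k + 1) / lam) ^ 2) := by
    refine (measure_mono fun x hx => ?_).trans
      (measure_ball_inter_ball_le hC hδ hvol (by positivity))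
    exact ⟨by rw [mem_ball, lt_div_iff₀ hlam, mul_comm]; exact hx.2.1, hx.2.2⟩
  calc ∫⁻ x in S, f x ∂μ ≤ ∫⁻ _ in S, ENNReal.ofReal (B * kernelProfile (2 ^ k)) ∂μ :=
        setLIntegral_mono measurable_const hbound
    _ = ENNReal.ofReal (B * kernelProfile (2 ^ k)) * μ S := setLIntegral_const _ _
    _ ≤ ENNReal.ofReal (B * kernelProfile (2 ^ k)) *
          ENNReal.ofReal (C * (2 ^ (k + 1) / lam) ^ 2) := by
        gcongr
    _ = ENNReal.ofReal (4 * B * C / lam ^ 2 * min (2 ^ k) (2 ^ k)⁻¹) := by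
        rw [← ENNReal.ofReal_mul (mul_nonneg hB (kernelProfile_nonneg hk.le)),
          ← sq_mul_kernelProfile hk, zpow_add_one₀ two_ne_zero]
        ring_nf

-- The growth bound only covers open balls of radius `≤ δ`, so the sphere `d = δ` is paid for
-- with the total mass `μ univ`.
theorem setLIntegral_compl_ball_le [IsFiniteMeasure μ] (hδ : 0 < δ) (hB : 0 ≤ B)
    (hlam : 0 < lam)
    (hf : ∀ x, 0 < dist x y → dist x y ≤ δ →
      f x ≤ ENNReal.ofReal (B * kernelProfile (lam * dist x y)))
    (hf0 : ∀ x, δ < dist x y → f x = 0) :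
    ∫⁻ x in (ball y δ)ᶜ, f x ∂μ ≤ ENNReal.ofReal (B * μ.real univ / (lam * δ) ^ 2) := by
  have hbound : ∀ x ∈ (ball y δ)ᶜ, f x ≤ ENNReal.ofReal (B / (lam * δ) ^ 2) := by
    intro x hx
    rcases (not_lt.1 (mem_ball.not.1 hx)).eq_or_lt with hxδ | hxδ
    · refine (hf x (hxδ ▸ hδ) hxδ.ge).trans (ENNReal.ofReal_le_ofReal ?_)
      rw [← hxδ, div_eq_mul_inv]
      exact mul_le_mul_of_nonneg_left (kernelProfile_le_inv_sq (by positivity)) hB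
    · simp [hf0 x hxδ]
  calc ∫⁻ x in (ball y δ)ᶜ, f x ∂μ
      ≤ ∫⁻ _ in (ball y δ)ᶜ, ENNReal.ofReal (B / (lam * δ) ^ 2) ∂μ :=
        setLIntegral_mono measurable_const hbound
    _ ≤ ENNReal.ofReal (B / (lam * δ) ^ 2) * μ univ := by
        rw [setLIntegral_const]; gcongr; exact subset_univ _
    _ = ENNReal.ofReal (B * μ.real univ / (lam * δ) ^ 2) := by
        rw [← ofReal_measureReal, ← ENNReal.ofReal_mul (by positivity)]; ring_nf

theorem lintegral_le_of_le_kernelProfile [IsFiniteMeasure μ] (hC : 0 ≤ C) (hδ : 0 < δ)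
    (hvol : ∀ r, 0 < r → r ≤ δ → μ (ball y r) ≤ ENNReal.ofReal (C * r ^ 2))
    (hB : 0 ≤ B) (hlam : 0 < lam)
    (hf : ∀ x, 0 < dist x y → dist x y ≤ δ →
      f x ≤ ENNReal.ofReal (B * kernelProfile (lam * dist x y)))
    (hf0 : ∀ x, δ < dist x y → f x = 0) :
    ∫⁻ x, f x ∂μ ≤ ENNReal.ofReal (B * (16 * C + μ.real univ / δ ^ 2) / lam ^ 2) := by
  set S : ℤ → Set M := fun k =>
    {x | 2 ^ k ≤ lam * dist x y ∧ lam * dist x y < 2 ^ (k + 1) ∧ dist x y < δ}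
  have hcover : univ ⊆ {y} ∪ (⋃ k, S k) ∪ (ball y δ)ᶜ := by
    intro x _
    rcases lt_or_ge (dist x y) δ with hxδ | hxδ
    · rcases (dist_nonneg (x := x) (y := y)).eq_or_lt with hd | hd
      · exact Or.inl (Or.inl (dist_eq_zero.1 hd.symm))
      · obtain ⟨k, hk⟩ := exists_mem_Ico_zpow (mul_pos hlam hd) one_lt_two
        exact Or.inl (Or.inr (mem_iUnion.2 ⟨k, hk.1, hk.2, hxδ⟩))
    · exact Or.inr (mem_ball.not.2 (not_lt.2 hxδ))
  have hcenter : ∫⁻ x in {y}, f x ∂μ = 0 :=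
    setLIntegral_measure_zero _ _ (measure_singleton_eq_zero_of_measure_ball_le hδ hvol)
  have hshells : ∫⁻ x in ⋃ k, S k, f x ∂μ ≤ ENNReal.ofReal (16 * B * C / lam ^ 2) :=
    calc ∫⁻ x in ⋃ k, S k, f x ∂μ ≤ ∑' k, ∫⁻ x in S k, f x ∂μ := lintegral_iUnion_le _ _
      _ ≤ ∑' k : ℤ, ENNReal.ofReal (4 * B * C / lam ^ 2 * min (2 ^ k) (2 ^ k)⁻¹) :=
        ENNReal.tsum_le_tsum fun k =>
          setLIntegral_shell_le hC hδ hvol hB hlam (fun x hx hxδ => hf x hx hxδ.le) k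
      _ ≤ ENNReal.ofReal (16 * B * C / lam ^ 2) :=
        (tsum_ofReal_mul_min_zpow_two_le (by positivity)).trans_eq (by ring_nf)
  calc ∫⁻ x, f x ∂μ ≤ ∫⁻ x in {y} ∪ (⋃ k, S k) ∪ (ball y δ)ᶜ, f x ∂μ := by
        rw [← setLIntegral_univ]; exact lintegral_mono_set hcover
    _ ≤ ∫⁻ x in {y}, f x ∂μ + ∫⁻ x in ⋃ k, S k, f x ∂μ + ∫⁻ x in (ball y δ)ᶜ, f x ∂μ :=
        (lintegral_union_le _ _ _).trans (add_le_add_left (lintegral_union_le _ _ _) _)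
    _ ≤ ENNReal.ofReal (16 * B * C / lam ^ 2) +
          ENNReal.ofReal (B * μ.real univ / (lam * δ) ^ 2) := by
        rw [hcenter, zero_add]
        exact add_le_add hshells (setLIntegral_compl_ball_le hδ hB hlam hf hf0)
    _ = ENNReal.ofReal (B * (16 * C + μ.real univ / δ ^ 2) / lam ^ 2) := by
        rw [← ENNReal.ofReal_add (by positivity) (by positivity)]
        congr 1
        field_simp

end VolumeGrowth

section KernelOperator

variable {X Y : Type*} [MeasurableSpace X] [MeasurableSpace Y] {μ : Measure X} {ν : Measure Y}

theorem lintegral_mul_rpow_le_lintegral_rpow_mul {K h : Y → ℝ≥0∞} (hK : AEMeasurable K ν)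
    (hh : AEMeasurable h ν) {p : ℝ} (hp : 1 ≤ p) :
    (∫⁻ y, K y * h y ∂ν) ^ p ≤ (∫⁻ y, K y ^ p * h y ∂ν) * (∫⁻ y, h y ∂ν) ^ (p - 1) := by
  have hp0 : 0 < p := zero_lt_one.trans_le hp
  -- Hölder's inequality for the measure `h dν`, with exponents `p` and `p / (p - 1)`
  have hsplit : ∀ y, K y * h y = (K y ^ p * h y) ^ p⁻¹ * h y ^ (1 - p⁻¹) := fun y => by
    rw [ENNReal.mul_rpow_of_nonneg _ _ (by positivity), ← ENNReal.rpow_mul, mul_inv_cancel₀ hp0.ne',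
      ENNReal.rpow_one, mul_assoc, ← ENNReal.rpow_add_of_nonneg _ _ (by positivity)
        (sub_nonneg.2 (inv_le_one_of_one_le₀ hp)), add_sub_cancel, ENNReal.rpow_one]
  have holder : ∫⁻ y, K y * h y ∂ν ≤ (∫⁻ y, K y ^ p * h y ∂ν) ^ p⁻¹ * (∫⁻ y, h y ∂ν) ^ (1 - p⁻¹) :=
    (lintegral_congr hsplit).trans_le <| ENNReal.lintegral_mul_norm_pow_le
      ((hK.pow_const p).mul hh) hh (inv_nonneg.2 hp0.le) (sub_nonneg.2 (inv_le_one_of_one_le₀ hp))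
      (add_sub_cancel _ _)
  calc (∫⁻ y, K y * h y ∂ν) ^ p
      ≤ ((∫⁻ y, K y ^ p * h y ∂ν) ^ p⁻¹ * (∫⁻ y, h y ∂ν) ^ (1 - p⁻¹)) ^ p :=
        ENNReal.rpow_le_rpow holder hp0.le
    _ = (∫⁻ y, K y ^ p * h y ∂ν) * (∫⁻ y, h y ∂ν) ^ (p - 1) := by
        rw [ENNReal.mul_rpow_of_nonneg _ _ hp0.le, ← ENNReal.rpow_mul, ← ENNReal.rpow_mul,
          inv_mul_cancel₀ hp0.ne', ENNReal.rpow_one, sub_mul, one_mul, inv_mul_cancel₀ hp0.ne']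

theorem lintegral_lintegral_mul_rpow_le [SFinite μ] [SFinite ν] {K : X → Y → ℝ≥0∞}
    (hK : Measurable (Function.uncurry K)) {h : Y → ℝ≥0∞} (hh : AEMeasurable h ν) {p : ℝ}
    (hp : 1 ≤ p) {A : ℝ≥0∞} (hA : ∀ y, ∫⁻ x, K x y ^ p ∂μ ≤ A) :
    ∫⁻ x, (∫⁻ y, K x y * h y ∂ν) ^ p ∂μ ≤ A * (∫⁻ y, h y ∂ν) ^ p := by
  set H := ∫⁻ y, h y ∂ν
  have hKp : AEMeasurable (Function.uncurry fun x y => K x y ^ p * h y) (μ.prod ν) :=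
    (hK.pow_const p).aemeasurable.mul hh.comp_snd
  have hint : AEMeasurable (fun x => ∫⁻ y, K x y ^ p * h y ∂ν) μ := hKp.lintegral_prod_right'
  have hHp : H * H ^ (p - 1) = H ^ p := by
    simpa using (ENNReal.rpow_add_of_nonneg (x := H) _ _ zero_le_one (sub_nonneg.2 hp)).symm
  calc ∫⁻ x, (∫⁻ y, K x y * h y ∂ν) ^ p ∂μ
      ≤ ∫⁻ x, (∫⁻ y, K x y ^ p * h y ∂ν) * H ^ (p - 1) ∂μ :=
        lintegral_mono fun x => lintegral_mul_rpow_le_lintegral_rpow_mul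
          (hK.comp measurable_prodMk_left).aemeasurable hh hp
    _ = (∫⁻ y, ∫⁻ x, K x y ^ p * h y ∂μ ∂ν) * H ^ (p - 1) := by
        rw [lintegral_mul_const'' _ hint, lintegral_lintegral_swap hKp]
    _ ≤ (∫⁻ y, A * h y ∂ν) * H ^ (p - 1) := by
        gcongr with y
        have hKy : Measurable fun x => K x y ^ p := (hK.comp measurable_prodMk_right).pow_const p
        rw [lintegral_mul_const _ hKy]
        gcongr; exact hA y
    _ = A * H ^ p := by
        rw [lintegral_const_mul'' _ hh, mul_assoc, hHp]

theorem integral_norm_pow_le_of_lintegral_le {E : Type*} [NormedAddCommGroup E] {F : X → E}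
    (hF : AEStronglyMeasurable F μ) {n : ℕ} {a : ℝ} (ha : 0 ≤ a)
    (h : ∫⁻ x, ‖F x‖ₑ ^ n ∂μ ≤ ENNReal.ofReal a) : ∫ x, ‖F x‖ ^ n ∂μ ≤ a := by
  rw [integral_eq_lintegral_of_nonneg_ae (ae_of_all _ fun x => by positivity)
    (hF.norm.aemeasurable.pow_const n).aestronglyMeasurable]
  refine ENNReal.toReal_le_of_le_ofReal ha ((lintegral_congr fun x => ?_).trans_le h)
  rw [ENNReal.ofReal_pow (norm_nonneg _), ofReal_norm]

theorem integral_norm_integral_mul_pow_le [SFinite μ] [SFinite ν] {𝕜 : Type*} [RCLike 𝕜]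
    {T : X → Y → 𝕜} (hT : Measurable (Function.uncurry T)) {g : Y → 𝕜} (hg : Integrable g ν)
    {n : ℕ} (hn : 1 ≤ n) {A : ℝ} (hA : 0 ≤ A)
    (hcol : ∀ y, ∫⁻ x, ‖T x y‖ₑ ^ n ∂μ ≤ ENNReal.ofReal A) :
    ∫ x, ‖∫ y, T x y * g y ∂ν‖ ^ n ∂μ ≤ A * (∫ y, ‖g y‖ ∂ν) ^ n := by
  have hTg : AEStronglyMeasurable (fun q : X × Y => T q.1 q.2 * g q.2) (μ.prod ν) :=
    hT.aestronglyMeasurable.mul hg.1.comp_snd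
  have hmeas : AEStronglyMeasurable (fun x => ∫ y, T x y * g y ∂ν) μ :=
    hTg.integral_prod_right'
  refine integral_norm_pow_le_of_lintegral_le hmeas (by positivity) ?_
  have key := lintegral_lintegral_mul_rpow_le (μ := μ) hT.enorm hg.1.enorm (p := n)
    (by exact_mod_cast hn) (A := ENNReal.ofReal A) (by simpa [ENNReal.rpow_natCast] using hcol)
  simp only [ENNReal.rpow_natCast] at key
  calc ∫⁻ x, ‖∫ y, T x y * g y ∂ν‖ₑ ^ n ∂μ
      ≤ ∫⁻ x, (∫⁻ y, ‖T x y‖ₑ * ‖g y‖ₑ ∂ν) ^ n ∂μ := by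
        gcongr with x
        simpa only [enorm_mul] using enorm_integral_le_lintegral_enorm (μ := ν) fun y => T x y * g y
    _ ≤ ENNReal.ofReal A * (∫⁻ y, ‖g y‖ₑ ∂ν) ^ n := key
    _ = ENNReal.ofReal (A * (∫ y, ‖g y‖ ∂ν) ^ n) := by
        rw [← ofReal_integral_norm_eq_lintegral_enorm hg, ENNReal.ofReal_mul hA,
          ENNReal.ofReal_pow (integral_nonneg fun y => norm_nonneg _)]

end KernelOperator

/-- the two-dimensional kernel bound.  If for `λ ≥ 1` a kernel `T` on a
finite-measure metric measure space with two-dimensional volume growth satisfies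
`|T(x,y)| ≤ C₀ λ^{-1/2} d(x,y)^{-1/2}` for `d(x,y) ≥ λ^{-1}`,
`|T(x,y)| ≤ C₀ |log(λ d(x,y)/2)|` for `0 < d(x,y) ≤ λ^{-1}`, and `T(x,y) = 0` for
`d(x,y) > δ`, then `sup_y (∫ |T(x,y)|⁶ dx)^{1/6} ≤ C' λ^{-1/3}`, and consequently, by
Minkowski's integral inequality, `‖∫ T(·,y) g(y) dy‖_{L⁶} ≤ C' λ^{-1/3} ‖g‖_{L¹}`. -/
theorem stmt_18 {M : Type*} [MetricSpace M] [MeasureSpace M]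
    [IsFiniteMeasure (volume : Measure M)]
    (C₀ C δ : ℝ) (hC₀ : 0 < C₀) (hC : 0 < C) (hδ : 0 < δ)
    (hvol : ∀ (y : M) (r : ℝ), 0 < r → r ≤ δ →
      volume (Metric.ball y r) ≤ ENNReal.ofReal (C * r ^ 2)) :
    ∃ C' : ℝ, 0 < C' ∧ ∀ lam : ℝ, 1 ≤ lam → ∀ T : M → M → ℂ, Measurable (Function.uncurry T) →
      (∀ x y, lam⁻¹ ≤ dist x y →
        ‖T x y‖ ≤ C₀ * lam ^ (-(1 : ℝ) / 2) * dist x y ^ (-(1 : ℝ) / 2)) →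
      (∀ x y, 0 < dist x y → dist x y ≤ lam⁻¹ →
        ‖T x y‖ ≤ C₀ * |Real.log (lam * dist x y / 2)|) →
      (∀ x y, δ < dist x y → T x y = 0) →
      (∀ y, (∫ x, ‖T x y‖ ^ 6) ^ ((1 : ℝ) / 6) ≤ C' * lam ^ (-(1 : ℝ) / 3)) ∧
        ∀ g : M → ℂ, Integrable g →
          (∫ x, ‖∫ y, T x y * g y‖ ^ 6) ^ ((1 : ℝ) / 6) ≤
            C' * lam ^ (-(1 : ℝ) / 3) * ∫ y, ‖g y‖ := by
  set B := 2 * (6 * C₀) ^ 6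
  set K := B * (16 * C + volume.real (univ : Set M) / δ ^ 2)
  have hK : 0 < K := by positivity
  refine ⟨K ^ ((1 : ℝ) / 6), by positivity, fun lam hlam T hT hfar hnear hsupp => ?_⟩
  have hlam0 : 0 < lam := zero_lt_one.trans_le hlam
  have hcol : ∀ y, ∫⁻ x, ‖T x y‖ₑ ^ 6 ≤ ENNReal.ofReal (K / lam ^ 2) := fun y =>
    lintegral_le_of_le_kernelProfile (B := B) hC.le hδ (hvol y) (by positivity) hlam0
      (fun x hx _ => by
        rw [← ofReal_norm, ← ENNReal.ofReal_pow (norm_nonneg _)]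
        exact ENNReal.ofReal_le_ofReal (pow_six_le_kernelProfile hC₀.le hlam0 hx (norm_nonneg _)
          (hfar x y) (hnear x y hx)))
      (fun x hx => by simp [hsupp x y hx])
  have hrate : (K / lam ^ 2) ^ ((1 : ℝ) / 6) = K ^ ((1 : ℝ) / 6) * lam ^ (-(1 : ℝ) / 3) := by
    rw [div_rpow hK.le (by positivity), ← rpow_natCast, ← rpow_mul hlam0.le, div_eq_mul_inv,
      ← rpow_neg hlam0.le]
    norm_num
  refine ⟨fun y => ?_, fun g hg => ?_⟩
  · rw [← hrate]
    exact rpow_le_rpow (integral_nonneg fun x => by positivity)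
      (integral_norm_pow_le_of_lintegral_le (hT.comp measurable_prodMk_right).aestronglyMeasurable
        (by positivity) (hcol y)) (by norm_num)
  · have hG : 0 ≤ ∫ y, ‖g y‖ := integral_nonneg fun y => norm_nonneg _
    calc (∫ x, ‖∫ y, T x y * g y‖ ^ 6) ^ ((1 : ℝ) / 6)
        ≤ (K / lam ^ 2 * (∫ y, ‖g y‖) ^ 6) ^ ((1 : ℝ) / 6) :=
          rpow_le_rpow (integral_nonneg fun x => by positivity)
            (integral_norm_integral_mul_pow_le hT hg (by norm_num) (by positivity) hcol)
            (by norm_num)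
      _ = K ^ ((1 : ℝ) / 6) * lam ^ (-(1 : ℝ) / 3) * ∫ y, ‖g y‖ := by
          rw [mul_rpow (by positivity) (by positivity), hrate, one_div,
            ← Nat.cast_ofNat, pow_rpow_inv_natCast hG (by norm_num)]
end
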